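/- Let X and X̄ be real M×T matrices, J a real T×T matrix, and D_int, D̄ real N×T matrices with N ≤ T such that both D_int D_intᵀ and (D̄ J)(D̄ J)ᵀ are invertible; write D_int⁺ = D_intᵀ (D_int D_intᵀ)⁻¹ and (D̄J)⁺ = (D̄J)ᵀ ((D̄J)(D̄J)ᵀ)⁻¹, and set Ξ = X̄ − X and E_int = D_int − D̄ J. Then the integral coefficient error ΔC_int = X D_int⁺ − X̄ (D̄ J)⁺ satisfies ‖ΔC_int‖₂ ≤ ((1+√5)/2) · ‖X̄‖₂ · ‖E_int‖₂ · ‖D_int⁺‖₂ · ‖(D̄J)⁺‖₂ + ‖Ξ‖₂ · ‖D_int⁺‖₂. -/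
import Mathlib


open Matrix

set_option maxHeartbeats 1000000

open scoped Matrix.Norms.L2Operator RealInnerProductSpace

/-- The spectral norm of a real matrix. -/
noncomputable def specNorm {m n : ℕ} (A : Matrix (Fin m) (Fin n) ℝ) : ℝ :=
  ‖LinearMap.toContinuousLinearMap (Matrix.toEuclideanLin A)‖

/-- The Moore–Penrose pseudoinverse of a full-row-rank matrix `A`:
`A⁺ = Aᵀ (A Aᵀ)⁻¹`. -/
noncomputable def pinv {m k : ℕ} (A : Matrix (Fin m) (Fin k) ℝ) :
    Matrix (Fin k) (Fin m) ℝ :=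
  Aᵀ * (A * Aᵀ)⁻¹

lemma toEuclideanLin_mul' {m n k : ℕ} (A : Matrix (Fin m) (Fin n) ℝ)
    (B : Matrix (Fin n) (Fin k) ℝ) (x : EuclideanSpace ℝ (Fin k)) :
    Matrix.toEuclideanLin (A * B) x =
      Matrix.toEuclideanLin A (Matrix.toEuclideanLin B x) := by
  simp [Matrix.toEuclideanLin_apply, Matrix.mulVec_mulVec]

lemma euclid_le {m n : ℕ} (A : Matrix (Fin m) (Fin n) ℝ) (x : EuclideanSpace ℝ (Fin n)) :
    ‖Matrix.toEuclideanLin A x‖ ≤ ‖A‖ * ‖x‖ := by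
  have := ((Matrix.toEuclideanLin (𝕜 := ℝ) (m := Fin m) (n := Fin n)).trans
    LinearMap.toContinuousLinearMap A).le_opNorm x
  simpa [Matrix.l2_opNorm_def] using this

lemma inner_eu {n m : ℕ} (A : Matrix (Fin n) (Fin m) ℝ) (x : EuclideanSpace ℝ (Fin m))
    (y : EuclideanSpace ℝ (Fin n)) :
    ⟪Matrix.toEuclideanLin A x, y⟫ = ⟪x, Matrix.toEuclideanLin Aᵀ y⟫ := by
  have had : Matrix.toEuclideanLin Aᴴ = LinearMap.adjoint (Matrix.toEuclideanLin A) :=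
    Matrix.toEuclideanLin_conjTranspose_eq_adjoint A
  rw [Matrix.conjTranspose_eq_transpose_of_trivial] at had
  rw [had, LinearMap.adjoint_inner_right]

lemma proj_norm_le_one {n : ℕ} (P : Matrix (Fin n) (Fin n) ℝ) (hs : Pᵀ = P)
    (hi : P * P = P) : ‖P‖ ≤ 1 := by
  have hPdef : ‖P‖ = ‖LinearMap.toContinuousLinearMap (Matrix.toEuclideanLin P)‖ := rfl
  rw [hPdef]
  apply ContinuousLinearMap.opNorm_le_bound _ zero_le_one
  intro x
  rw [show LinearMap.toContinuousLinearMap (Matrix.toEuclideanLin P) x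
      = Matrix.toEuclideanLin P x from rfl, one_mul]
  set u := Matrix.toEuclideanLin P x with hu
  have h1 : ⟪u, u⟫ = ⟪x, u⟫ := by
    rw [hu, inner_eu, hs, ← toEuclideanLin_mul', hi]
  have h2 : ‖u‖ ^ 2 ≤ ‖x‖ * ‖u‖ := by
    rw [← real_inner_self_eq_norm_sq, h1]
    exact real_inner_le_norm x u
  rcases eq_or_lt_of_le (norm_nonneg u) with h | h
  · rw [← h]; exact norm_nonneg x
  · nlinarith

lemma pythag {n k : ℕ} (P : Matrix (Fin n) (Fin n) ℝ) (F : Matrix (Fin n) (Fin k) ℝ)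
    (hs : Pᵀ = P) (hi : P * P = P) :
    ‖F‖ ≤ Real.sqrt (‖P * F‖ ^ 2 + ‖(1 - P) * F‖ ^ 2) := by
  have hFdef : ‖F‖ = ‖LinearMap.toContinuousLinearMap (Matrix.toEuclideanLin F)‖ := rfl
  rw [hFdef]
  apply ContinuousLinearMap.opNorm_le_bound _ (Real.sqrt_nonneg _)
  intro x
  rw [show LinearMap.toContinuousLinearMap (Matrix.toEuclideanLin F) x
      = Matrix.toEuclideanLin F x from rfl]
  set u := Matrix.toEuclideanLin F x with hu
  set a := Matrix.toEuclideanLin (P * F) x with ha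
  set b := Matrix.toEuclideanLin ((1 - P) * F) x with hb
  have hPF : ((1 : Matrix (Fin n) (Fin n) ℝ) - P) * F = F - P * F := by
    rw [Matrix.sub_mul, Matrix.one_mul]
  have hab : u = a + b := by
    rw [ha, hb, hu, hPF, map_sub, LinearMap.sub_apply]
    abel
  have horth : ⟪a, b⟫ = 0 := by
    rw [ha, hb, toEuclideanLin_mul', inner_eu, ← toEuclideanLin_mul', hs,
      show P * ((1 - P) * F) = (P * (1 - P)) * F from (Matrix.mul_assoc _ _ _).symm,
      show P * ((1 : Matrix (Fin n) (Fin n) ℝ) - P) = P - P * P by rw [Matrix.mul_sub, Matrix.mul_one],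
      hi, sub_self, Matrix.zero_mul]
    simp
  have hsq : ‖u‖ ^ 2 = ‖a‖ ^ 2 + ‖b‖ ^ 2 := by
    rw [hab, norm_add_sq_real, horth]; ring
  have hA : ‖a‖ ≤ ‖P * F‖ * ‖x‖ := euclid_le _ _
  have hB : ‖b‖ ≤ ‖(1 - P) * F‖ * ‖x‖ := euclid_le _ _
  have h2 : ‖u‖ ^ 2 ≤ (‖P * F‖ ^ 2 + ‖(1 - P) * F‖ ^ 2) * ‖x‖ ^ 2 := by
    rw [hsq]; nlinarith [norm_nonneg a, norm_nonneg b, norm_nonneg x,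
      mul_nonneg (norm_nonneg (P * F)) (norm_nonneg x),
      mul_nonneg (norm_nonneg ((1 - P) * F)) (norm_nonneg x)]
  calc ‖u‖ = Real.sqrt (‖u‖ ^ 2) := by rw [Real.sqrt_sq (norm_nonneg u)]
    _ ≤ Real.sqrt ((‖P * F‖ ^ 2 + ‖(1 - P) * F‖ ^ 2) * ‖x‖ ^ 2) := Real.sqrt_le_sqrt h2
    _ = Real.sqrt (‖P * F‖ ^ 2 + ‖(1 - P) * F‖ ^ 2) * ‖x‖ := by
        rw [Real.sqrt_mul (by positivity), Real.sqrt_sq (norm_nonneg x)]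

section PinvFacts
variable {N T : ℕ} (A : Matrix (Fin N) (Fin T) ℝ)

lemma pinv_right (hA : IsUnit (A * Aᵀ).det) : A * pinv A = 1 := by
  unfold pinv
  rw [← Matrix.mul_assoc, Matrix.mul_nonsing_inv _ hA]

lemma pinv_transpose : (pinv A)ᵀ = (A * Aᵀ)⁻¹ * A := by
  unfold pinv
  rw [Matrix.transpose_mul, Matrix.transpose_nonsing_inv, Matrix.transpose_mul,
    Matrix.transpose_transpose]

lemma pinv_gram (hA : IsUnit (A * Aᵀ).det) : (pinv A)ᵀ * pinv A = (A * Aᵀ)⁻¹ := by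
  rw [pinv_transpose]
  unfold pinv
  rw [Matrix.mul_assoc, ← Matrix.mul_assoc A, Matrix.mul_nonsing_inv _ hA, Matrix.mul_one]

lemma proj_symm : (pinv A * A)ᵀ = pinv A * A := by
  rw [Matrix.transpose_mul, pinv_transpose]
  unfold pinv
  rw [Matrix.mul_assoc]

lemma proj_idem (hA : IsUnit (A * Aᵀ).det) : (pinv A * A) * (pinv A * A) = pinv A * A := by
  rw [Matrix.mul_assoc, ← Matrix.mul_assoc A, pinv_right A hA, Matrix.one_mul]

lemma proj_B (hA : IsUnit (A * Aᵀ).det) : (pinv A * A) * Aᵀ = Aᵀ := by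
  unfold pinv
  rw [Matrix.mul_assoc, Matrix.mul_assoc, Matrix.nonsing_inv_mul _ hA, Matrix.mul_one]

end PinvFacts

lemma pinv_perturb {N T : ℕ} (A B : Matrix (Fin N) (Fin T) ℝ)
    (hA : IsUnit (A * Aᵀ).det) (hB : IsUnit (B * Bᵀ).det)
    (hle : ‖pinv A‖ ≤ ‖pinv B‖) :
    ‖pinv A - pinv B‖ ≤ Real.sqrt 2 * (‖B - A‖ * (‖pinv A‖ * ‖pinv B‖)) := by
  set Q : Matrix (Fin T) (Fin T) ℝ := pinv B * B with hQ
  set G : Matrix (Fin T) (Fin N) ℝ := pinv A - pinv B with hG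
  have hQs : Qᵀ = Q := proj_symm B
  have hQi : Q * Q = Q := proj_idem B hB
  -- first component
  have hBA : B * pinv A = 1 + (B - A) * pinv A := by
    rw [Matrix.sub_mul, pinv_right A hA]
    abel
  have hQG : Q * G = pinv B * ((B - A) * pinv A) := by
    rw [hG, hQ, Matrix.mul_sub, Matrix.mul_assoc, Matrix.mul_assoc, pinv_right B hB,
      Matrix.mul_one, hBA, Matrix.mul_add, Matrix.mul_one]
    abel
  -- second component
  have e1 : ((1 : Matrix (Fin T) (Fin T) ℝ) - Q) * pinv B = 0 := by
    rw [Matrix.sub_mul, Matrix.one_mul, hQ, Matrix.mul_assoc, pinv_right B hB,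
      Matrix.mul_one, sub_self]
  have e2 : ((1 : Matrix (Fin T) (Fin T) ℝ) - Q) * Bᵀ = 0 := by
    rw [Matrix.sub_mul, Matrix.one_mul, hQ, proj_B B hB, sub_self]
  have hQG2 : ((1 : Matrix (Fin T) (Fin T) ℝ) - Q) * G =
      -(((1 : Matrix (Fin T) (Fin T) ℝ) - Q) * ((B - A)ᵀ * ((pinv A)ᵀ * pinv A))) := by
    have hApinv : pinv A = Aᵀ * ((pinv A)ᵀ * pinv A) := by
      rw [pinv_gram A hA]; rfl
    have hAt : Aᵀ = Bᵀ - (B - A)ᵀ := by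
      rw [Matrix.transpose_sub]; abel
    have step1 : ((1 : Matrix (Fin T) (Fin T) ℝ) - Q) * G
        = ((1 : Matrix (Fin T) (Fin T) ℝ) - Q) * pinv A := by
      rw [hG, Matrix.mul_sub, e1, sub_zero]
    have step2 : ((1 : Matrix (Fin T) (Fin T) ℝ) - Q) * Aᵀ = -(((1 : Matrix (Fin T) (Fin T) ℝ) - Q) * (B - A)ᵀ) := by
      rw [hAt, Matrix.mul_sub, e2, zero_sub]
    rw [step1]
    conv_lhs => rw [hApinv]
    rw [← Matrix.mul_assoc, step2, Matrix.neg_mul, Matrix.mul_assoc]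
  -- norms
  set e := ‖B - A‖ with he
  set α := ‖pinv A‖ with hα
  set β := ‖pinv B‖ with hβ
  have hen : (0:ℝ) ≤ e := norm_nonneg _
  have hαn : (0:ℝ) ≤ α := norm_nonneg _
  have hβn : (0:ℝ) ≤ β := norm_nonneg _
  have htr : ∀ {p q : ℕ} (C : Matrix (Fin p) (Fin q) ℝ), ‖Cᵀ‖ = ‖C‖ := by
    intro p q C
    rw [← Matrix.l2_opNorm_conjTranspose C]; congr 1
  have h1 : ‖Q * G‖ ≤ e * (α * β) := by
    rw [hQG]
    have m1 := Matrix.l2_opNorm_mul (pinv B) ((B - A) * pinv A)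
    have m2 := Matrix.l2_opNorm_mul (B - A) (pinv A)
    have : ‖(B - A) * pinv A‖ ≤ e * α := m2
    nlinarith [norm_nonneg ((B - A) * pinv A)]
  have h1Qs : ((1 : Matrix (Fin T) (Fin T) ℝ) - Q)ᵀ = 1 - Q := by
    rw [Matrix.transpose_sub, Matrix.transpose_one, hQs]
  have h1Qi : ((1 : Matrix (Fin T) (Fin T) ℝ) - Q) * (1 - Q) = 1 - Q := by
    rw [Matrix.sub_mul, Matrix.one_mul, Matrix.mul_sub, Matrix.mul_one, hQi]
    abel
  have h2 : ‖((1 : Matrix (Fin T) (Fin T) ℝ) - Q) * G‖ ≤ e * (α * β) := by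
    rw [hQG2, norm_neg]
    have m1 := Matrix.l2_opNorm_mul ((1 : Matrix (Fin T) (Fin T) ℝ) - Q)
      ((B - A)ᵀ * ((pinv A)ᵀ * pinv A))
    have m2 := Matrix.l2_opNorm_mul (B - A)ᵀ ((pinv A)ᵀ * pinv A)
    have m3 := Matrix.l2_opNorm_mul (pinv A)ᵀ (pinv A)
    have hp : ‖(1 : Matrix (Fin T) (Fin T) ℝ) - Q‖ ≤ 1 := proj_norm_le_one _ h1Qs h1Qi
    rw [htr] at m2 m3
    have hαβ : α * α ≤ α * β := by nlinarith
    nlinarith [norm_nonneg ((B - A)ᵀ * ((pinv A)ᵀ * pinv A)),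
      norm_nonneg ((pinv A)ᵀ * pinv A), norm_nonneg ((1 : Matrix (Fin T) (Fin T) ℝ) - Q),
      mul_nonneg hen hαn]
  have hpyth := pythag Q G hQs hQi
  refine hpyth.trans ?_
  have hsum : ‖Q * G‖ ^ 2 + ‖((1 : Matrix (Fin T) (Fin T) ℝ) - Q) * G‖ ^ 2
      ≤ 2 * (e * (α * β)) ^ 2 := by
    nlinarith [norm_nonneg (Q * G), norm_nonneg (((1 : Matrix (Fin T) (Fin T) ℝ) - Q) * G),
      mul_nonneg hen (mul_nonneg hαn hβn)]
  calc Real.sqrt (‖Q * G‖ ^ 2 + ‖((1 : Matrix (Fin T) (Fin T) ℝ) - Q) * G‖ ^ 2)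
      ≤ Real.sqrt (2 * (e * (α * β)) ^ 2) := Real.sqrt_le_sqrt hsum
    _ = Real.sqrt 2 * (e * (α * β)) := by
        rw [Real.sqrt_mul (by norm_num), Real.sqrt_sq (by positivity)]


lemma specNorm_eq_l2 {m n : ℕ} (A : Matrix (Fin m) (Fin n) ℝ) : specNorm A = ‖A‖ := rfl

lemma sqrt_two_le_golden : Real.sqrt 2 ≤ (1 + Real.sqrt 5) / 2 := by
  have h2 : Real.sqrt 2 ≤ 1.5 := by
    calc Real.sqrt 2 ≤ Real.sqrt 2.25 := Real.sqrt_le_sqrt (by norm_num)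
      _ = 1.5 := by
          rw [show (2.25:ℝ) = 1.5 ^ 2 by norm_num, Real.sqrt_sq (by norm_num)]
  have h5 : (2:ℝ) ≤ Real.sqrt 5 := by
    calc (2:ℝ) = Real.sqrt 4 := by
          rw [show (4:ℝ) = 2 ^ 2 by norm_num, Real.sqrt_sq (by norm_num)]
      _ ≤ Real.sqrt 5 := Real.sqrt_le_sqrt (by norm_num)
  linarith

/-- Integral part of Theorem 3.4: spectral-norm bound on the integral
coefficient error `ΔC_int = X D_int⁺ - X̄ (D̄ J)⁺`. -/
theorem int_coefficient_error_bound {M N T : ℕ} (hNT : N ≤ T)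
    (X Xbar : Matrix (Fin M) (Fin T) ℝ)
    (J : Matrix (Fin T) (Fin T) ℝ)
    (Dint Dbar : Matrix (Fin N) (Fin T) ℝ)
    (hDint : IsUnit (Dint * Dintᵀ).det)
    (hDbarJ : IsUnit ((Dbar * J) * (Dbar * J)ᵀ).det) :
    specNorm (X * pinv Dint - Xbar * pinv (Dbar * J)) ≤
      (1 + Real.sqrt 5) / 2 * specNorm Xbar * specNorm (Dint - Dbar * J) *
          specNorm (pinv Dint) * specNorm (pinv (Dbar * J)) +
        specNorm (Xbar - X) * specNorm (pinv Dint) := by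
  simp only [specNorm_eq_l2]
  set A := Dint with hAdef
  set B := Dbar * J with hBdef
  have hdiff : ‖pinv A - pinv B‖ ≤ Real.sqrt 2 * (‖A - B‖ * (‖pinv A‖ * ‖pinv B‖)) := by
    rcases le_total ‖pinv A‖ ‖pinv B‖ with h | h
    · have h' := pinv_perturb A B hDint hDbarJ h
      rwa [norm_sub_rev B A] at h'
    · have h' := pinv_perturb B A hDbarJ hDint h
      rwa [norm_sub_rev (pinv B) (pinv A), mul_comm ‖pinv B‖ ‖pinv A‖] at h'
  have hsplit : X * pinv A - Xbar * pinv B = Xbar * (pinv A - pinv B) - (Xbar - X) * pinv A := by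
    rw [Matrix.mul_sub, Matrix.sub_mul]
    abel
  rw [hsplit]
  have t1 : ‖Xbar * (pinv A - pinv B) - (Xbar - X) * pinv A‖
      ≤ ‖Xbar‖ * ‖pinv A - pinv B‖ + ‖Xbar - X‖ * ‖pinv A‖ :=
    (norm_sub_le _ _).trans
      (add_le_add (Matrix.l2_opNorm_mul _ _) (Matrix.l2_opNorm_mul _ _))
  refine t1.trans (add_le_add ?_ le_rfl)
  calc ‖Xbar‖ * ‖pinv A - pinv B‖
      ≤ ‖Xbar‖ * (Real.sqrt 2 * (‖A - B‖ * (‖pinv A‖ * ‖pinv B‖))) :=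
        mul_le_mul_of_nonneg_left hdiff (norm_nonneg _)
    _ = Real.sqrt 2 * (‖Xbar‖ * ‖A - B‖ * ‖pinv A‖ * ‖pinv B‖) := by ring
    _ ≤ (1 + Real.sqrt 5) / 2 * (‖Xbar‖ * ‖A - B‖ * ‖pinv A‖ * ‖pinv B‖) :=
        mul_le_mul_of_nonneg_right sqrt_two_le_golden (by positivity)
    _ = (1 + Real.sqrt 5) / 2 * ‖Xbar‖ * ‖A - B‖ * ‖pinv A‖ * ‖pinv B‖ := by ring
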